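/- Let m ≥ 2 be a natural number, let h : Fin m → ℝ satisfy h_i > 0 for all i and Σ_i h_i = 1, and let γ > 0 and γ' > 0 be reals. For a parameter c > 0, define the Dirichlet density with parameters (c·h_1, …, c·h_m) at a point q in the open simplex {q : Fin m → ℝ | q_i > 0 for all i, Σ_i q_i = 1} by f_c(q) = (Real.Gamma(c) / ∏_i Real.Gamma(c·h_i)) · ∏_i q_i^{c·h_i − 1}. If f_γ(q) = f_{γ'}(q) for every q in the open simplex, then γ = γ'. -/

import Mathlib

/-!
The Dirichlet family with parameters `(c h₁, …, c h_m)` is an exponential family in `c` with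
sufficient statistic `T(q) = ∑ hᵢ log qᵢ`: taking logarithms, equality of the densities for
`γ` and `γ'` says that `(γ - γ') T` is constant on the open simplex. But `T` is not constant
there: it equals `-log m` at the barycentre and tends to `-∞` as one coordinate tends to `0`.
-/

open Finset Real

def openSimplex (ι : Type*) [Fintype ι] : Set (ι → ℝ) :=
  {q | (∀ i, 0 < q i) ∧ ∑ i, q i = 1}

noncomputable def dirichletSufficientStat {ι : Type*} [Fintype ι] (h q : ι → ℝ) : ℝ :=
  ∑ i, h i * log (q i)

section OpenSimplex

variable {ι : Type*} [Fintype ι]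

lemma apply_le_one_of_mem_openSimplex {q : ι → ℝ} (hq : q ∈ openSimplex ι) (i : ι) :
    q i ≤ 1 :=
  hq.2 ▸ single_le_sum (fun j _ => (hq.1 j).le) (mem_univ i)

lemma const_mem_openSimplex [Nonempty ι] :
    (fun _ => (Fintype.card ι : ℝ)⁻¹) ∈ openSimplex ι := by
  refine ⟨fun _ => by positivity, ?_⟩
  simp [Finset.card_univ]

lemma exists_mem_openSimplex_apply_eq [Nontrivial ι] (i : ι) {t : ℝ}
    (ht₀ : 0 < t) (ht₁ : t < 1) : ∃ q ∈ openSimplex ι, q i = t := by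
  classical
  have hcard : (1 : ℝ) < Fintype.card ι := by exact_mod_cast Fintype.one_lt_card
  set q := Function.update (fun _ => (1 - t) / (Fintype.card ι - 1)) i t
  refine ⟨q, ⟨fun j => ?_, ?_⟩, by simp [q]⟩
  · rcases eq_or_ne j i with rfl | hj
    · simpa [q] using ht₀
    · simp only [q, Function.update_of_ne hj]
      exact div_pos (by linarith) (by linarith)
  · rw [sum_update_of_mem (mem_univ i), sum_const, card_univ_sdiff, card_singleton,
      nsmul_eq_mul, Nat.cast_sub Fintype.card_pos, Nat.cast_one,
      mul_div_cancel₀ _ (by linarith : (Fintype.card ι : ℝ) - 1 ≠ 0)]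
    ring

end OpenSimplex

section SufficientStat

variable {ι : Type*} [Fintype ι] {h : ι → ℝ}

lemma dirichletSufficientStat_const (hsum : ∑ i, h i = 1) (x : ℝ) :
    dirichletSufficientStat h (fun _ => x) = log x := by
  simp [dirichletSufficientStat, ← sum_mul, hsum]

lemma dirichletSufficientStat_le (hh : ∀ i, 0 ≤ h i) {q : ι → ℝ} (hq : q ∈ openSimplex ι)
    (i : ι) : dirichletSufficientStat h q ≤ h i * log (q i) := by
  have hterm : ∀ j ∈ univ, 0 ≤ -(h j * log (q j)) := fun j _ =>
    neg_nonneg.2 <| mul_nonpos_of_nonneg_of_nonpos (hh j)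
      (log_nonpos (hq.1 j).le (apply_le_one_of_mem_openSimplex hq j))
  have hsingle := single_le_sum hterm (mem_univ i)
  rw [sum_neg_distrib] at hsingle
  exact le_of_neg_le_neg hsingle

lemma exists_dirichletSufficientStat_ne [Nontrivial ι] (hpos : ∀ i, 0 < h i)
    (hsum : ∑ i, h i = 1) :
    ∃ q ∈ openSimplex ι, ∃ q' ∈ openSimplex ι,
      dirichletSufficientStat h q ≠ dirichletSufficientStat h q' := by
  obtain ⟨i⟩ := (inferInstance : Nonempty ι)
  set n : ℝ := (Fintype.card ι : ℝ)
  have hn : 0 ≤ log n := log_nonneg (Nat.one_le_cast.2 Fintype.card_pos)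
  -- `t = exp s` with `h i * s = -(log n + 1)`, so that `T` at `q'` is below `-log n`
  set s := -(log n + 1) / h i
  have hs : s < 0 := div_neg_of_neg_of_pos (by linarith) (hpos i)
  obtain ⟨q', hq', hq'i⟩ :=
    exists_mem_openSimplex_apply_eq i (exp_pos s) (exp_lt_one_iff.2 hs)
  refine ⟨_, const_mem_openSimplex, q', hq', ne_of_gt ?_⟩
  calc dirichletSufficientStat h q' ≤ h i * log (q' i) :=
        dirichletSufficientStat_le (fun j => (hpos j).le) hq' i
    _ = -(log n + 1) := by rw [hq'i, log_exp, mul_div_cancel₀ _ (hpos i).ne']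
    _ < log n⁻¹ := by rw [log_inv]; linarith
    _ = _ := (dirichletSufficientStat_const hsum _).symm

lemma log_mul_prod_rpow_mul_sub_one {C : ℝ} (hC : C ≠ 0) {q : ι → ℝ} (hq : ∀ i, 0 < q i)
    (c : ℝ) :
    log (C * ∏ i, q i ^ (c * h i - 1)) =
      log C + c * dirichletSufficientStat h q - ∑ i, log (q i) := by
  rw [log_mul hC (prod_pos fun i _ => rpow_pos_of_pos (hq i) _).ne',
    log_prod fun i _ => (rpow_pos_of_pos (hq i) _).ne', dirichletSufficientStat, mul_sum]
  simp only [log_rpow (hq _), sub_mul, one_mul, mul_assoc, sum_sub_distrib]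
  ring

end SufficientStat

lemma gamma_div_prod_gamma_mul_pos {ι : Type*} [Fintype ι] {h : ι → ℝ} (hpos : ∀ i, 0 < h i)
    {c : ℝ} (hc : 0 < c) : 0 < Gamma c / ∏ i, Gamma (c * h i) :=
  div_pos (Gamma_pos_of_pos hc) (prod_pos fun i _ => Gamma_pos_of_pos (mul_pos hc (hpos i)))

/-- Identifiability of the Dirichlet concentration parameter: if the Dirichlet densities
with parameters `(γ h₁, …, γ h_m)` and `(γ' h₁, …, γ' h_m)` agree on the open simplex,
then `γ = γ'`. -/
theorem stmt_16 (m : ℕ) (hm : 2 ≤ m) (h : Fin m → ℝ)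
    (hpos : ∀ i, 0 < h i) (hsum : ∑ i, h i = 1)
    (γ γ' : ℝ) (hγ : 0 < γ) (hγ' : 0 < γ')
    (heq : ∀ q : Fin m → ℝ, (∀ i, 0 < q i) → ∑ i, q i = 1 →
      (Real.Gamma γ / ∏ i, Real.Gamma (γ * h i)) * ∏ i, q i ^ (γ * h i - 1) =
      (Real.Gamma γ' / ∏ i, Real.Gamma (γ' * h i)) * ∏ i, q i ^ (γ' * h i - 1)) :
    γ = γ' := by
  have : Nontrivial (Fin m) := Fin.nontrivial_iff_two_le.2 hm
  set K := Real.Gamma γ / ∏ i, Real.Gamma (γ * h i)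
  set K' := Real.Gamma γ' / ∏ i, Real.Gamma (γ' * h i)
  have hK := (gamma_div_prod_gamma_mul_pos hpos hγ).ne'
  have hK' := (gamma_div_prod_gamma_mul_pos hpos hγ').ne'
  have key : ∀ q ∈ openSimplex (Fin m),
      (γ - γ') * dirichletSufficientStat h q = log K' - log K := by
    intro q hq
    have hlog := congrArg log (heq q hq.1 hq.2)
    rw [log_mul_prod_rpow_mul_sub_one hK hq.1, log_mul_prod_rpow_mul_sub_one hK' hq.1] at hlog
    linarith
  obtain ⟨q, hq, q', hq', hne⟩ := exists_dirichletSufficientStat_ne hpos hsum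
  rcases mul_eq_mul_left_iff.1 ((key q hq).trans (key q' hq').symm) with hT | hγγ'
  · exact absurd hT hne
  · linarith
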